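/- Let E be a finite-dimensional real normed vector space and L ⊆ E a ℤ-lattice. If S ⊆ E ⧸ L is a preconnected subset containing 0 all of whose elements are torsion (for every x ∈ S there is a nonzero integer n with n • x = 0), then S = {0}. -/

import Mathlib

/-!
A discrete subgroup `L` of a finite-dimensional space is countable and closed, so `E ⧸ L` is a
metric space. A torsion point of `E ⧸ L` is the class of some `v` with `n • v ∈ L`, `n ≠ 0`, and
`v` is determined by `n • v`; hence there are only countably many torsion points. A countable
preconnected subset of a metric space is a subsingleton.
-/

theorem QuotientAddGroup.countable_setOf_isOfFinAddOrder {G : Type*} [AddCommGroup G]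
    [IsAddTorsionFree G] (H : AddSubgroup G) [Countable H] :
    {x : G ⧸ H | IsOfFinAddOrder x}.Countable := by
  have hdiv (n : ℕ) : {v : G | (n + 1) • v ∈ H}.Countable :=
    Set.MapsTo.countable_of_injOn (f := ((n + 1) • ·)) (fun _ hv => hv)
      (IsAddTorsionFree.nsmul_right_injective n.succ_ne_zero).injOn (Set.countable_coe_iff.mp ‹_›)
  refine (Set.countable_iUnion fun n => (hdiv n).image QuotientAddGroup.mk).mono ?_
  intro x hx
  obtain ⟨n, hn, hnx⟩ := isOfFinAddOrder_iff_nsmul_eq_zero.mp hx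
  obtain ⟨v, rfl⟩ := QuotientAddGroup.mk_surjective x
  obtain ⟨m, rfl⟩ := Nat.exists_eq_add_one_of_ne_zero hn.ne'
  exact Set.mem_iUnion.mpr ⟨m, v, (QuotientAddGroup.eq_zero_iff _).mp hnx, rfl⟩

theorem stmt_3_general {E : Type*}
    [NormedAddCommGroup E] [NormedSpace ℝ E] [FiniteDimensional ℝ E]
    (L : Submodule ℤ E) [DiscreteTopology L]
    (S : Set (E ⧸ L.toAddSubgroup)) (hconn : IsPreconnected S) (h0 : 0 ∈ S)
    (htors : ∀ x ∈ S, ∃ n : ℤ, n ≠ 0 ∧ n • x = 0) :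
    S = {0} := by
  have : Module ℚ E := Module.compHom E (algebraMap ℚ ℝ)
  have : IsAddTorsionFree E := .of_module_rat E
  have : Countable L := TopologicalSpace.separableSpace_iff_countable.mp inferInstance
  have : Countable L.toAddSubgroup := inferInstanceAs (Countable L)
  have hS : S.Countable := (QuotientAddGroup.countable_setOf_isOfFinAddOrder _).mono
    fun x hx => isOfFinAddOrder_iff_zsmul_eq_zero.mpr (htors x hx)
  exact (hS.isTotallyDisconnected S subset_rfl hconn).eq_singleton_of_mem h0

/-- A preconnected subset of a real torus containing `0` all of whose elements are
torsion is reduced to `{0}`. -/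
theorem stmt_3 {E : Type*}
    [NormedAddCommGroup E] [NormedSpace ℝ E] [FiniteDimensional ℝ E]
    (L : Submodule ℤ E) [DiscreteTopology L] [IsZLattice ℝ L]
    (S : Set (E ⧸ L.toAddSubgroup)) (hconn : IsPreconnected S) (h0 : 0 ∈ S)
    (htors : ∀ x ∈ S, ∃ n : ℤ, n ≠ 0 ∧ n • x = 0) :
    S = {0} :=
  stmt_3_general L S hconn h0 htors
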